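/- Let V₀ = ⟨s⟩V be an F-clique with elements x̂₁,…,x̂_m̂, and let V_i = {x ∈ V : ⟨s⟩x = x̂_i}. Then {V₁,…,V_m̂} is a partition of V into nonempty sets, and for every function σ in the submonoid generated by Σ₀, the induced map i ↦ j where σ(x̂_i) ∈ V_j is a well-defined permutation of {1,…,m̂}. -/
import Mathlib


/-- Composition of a word `s = [σ_p, ..., σ_1]` of maps: `⟨s⟩ = σ_p ∘ ⋯ ∘ σ_1`. -/
def wcomp {V : Type*} (s : List (V → V)) : V → V := s.foldr (· ∘ ·) id

lemma wcomp_append {V : Type*} (a b : List (V → V)) :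
    wcomp (a ++ b) = wcomp a ∘ wcomp b := by
  simp [wcomp, List.foldr_append]
  induction a with
  | nil => rfl
  | cons f t ih => simp [List.foldr, ih]; rfl

/-- Let `V₀ = ⟨s₀⟩V` be an F-clique enumerated as `x̂₁,…,x̂_m̂`, and let
`V_i = {x : ⟨s₀⟩x = x̂ᵢ}`. Then the `V_i` form a partition of `V` into nonempty
sets, and every element of the submonoid generated by `Sig0` (i.e. every `⟨s⟩`)
induces a well-defined permutation `i ↦ j` given by `⟨s⟩(x̂ᵢ) ∈ V_j`. -/
theorem stmt_14 {V : Type*} [Fintype V] [DecidableEq V] (Sig0 : Set (V → V))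
    (s₀ : List (V → V)) (hs₀ : ∀ f ∈ s₀, f ∈ Sig0)
    (hdead : ∀ s : List (V → V), (∀ f ∈ s, f ∈ Sig0) →
      Set.InjOn (wcomp s) (Set.range (wcomp s₀)))
    (m : ℕ) (xhat : Fin m → V) (hinj : Function.Injective xhat)
    (hrange : Set.range xhat = Set.range (wcomp s₀)) :
    (∀ i : Fin m, {x : V | wcomp s₀ x = xhat i}.Nonempty) ∧
    (∀ x : V, ∃! i : Fin m, wcomp s₀ x = xhat i) ∧
    (∀ s : List (V → V), (∀ f ∈ s, f ∈ Sig0) →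
      ∃ π : Equiv.Perm (Fin m), ∀ i, wcomp s₀ (wcomp s (xhat i)) = xhat (π i)) := by
  refine ⟨?_, ?_, ?_⟩
  · intro i
    have : xhat i ∈ Set.range (wcomp s₀) := hrange ▸ Set.mem_range_self i
    obtain ⟨x, hx⟩ := this
    exact ⟨x, hx⟩
  · intro x
    have : wcomp s₀ x ∈ Set.range xhat := hrange ▸ Set.mem_range_self x
    obtain ⟨i, hi⟩ := this
    exact ⟨i, hi.symm, fun j hj => hinj (hi ▸ hj.symm)⟩
  · intro s hs
    have hmem : ∀ i : Fin m, ∃ j : Fin m,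
        wcomp s₀ (wcomp s (xhat i)) = xhat j := by
      intro i
      have : wcomp s₀ (wcomp s (xhat i)) ∈ Set.range xhat :=
        hrange ▸ Set.mem_range_self _
      obtain ⟨j, hj⟩ := this
      exact ⟨j, hj.symm⟩
    choose f hf using hmem
    have hfinj : Function.Injective f := by
      intro i k hik
      have hall : ∀ g ∈ s₀ ++ s, g ∈ Sig0 := by
        intro g hg
        rcases List.mem_append.mp hg with h | h
        · exact hs₀ g h
        · exact hs g h
      have h1 : xhat i ∈ Set.range (wcomp s₀) := hrange ▸ Set.mem_range_self i
      have h2 : xhat k ∈ Set.range (wcomp s₀) := hrange ▸ Set.mem_range_self k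
      have heq : wcomp (s₀ ++ s) (xhat i) = wcomp (s₀ ++ s) (xhat k) := by
        rw [wcomp_append]
        simp only [Function.comp_apply]
        rw [hf i, hf k, hik]
      exact hinj (hdead (s₀ ++ s) hall h1 h2 heq)
    exact ⟨Equiv.ofBijective f (Finite.injective_iff_bijective.mp hfinj),
      fun i => hf i⟩
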